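/- arXiv:1406.0742 — 2 statements merged into one kernel-verified Lean document; each statement's English description precedes it below -/
import Mathlib

section
/- Let T > 0 and α ∈ (0,1). There exist constants C = C(α,m,n,T) > 0 and m₀ = m₀(α,m,n) > 0 such that for every function u ∈ C^{0,2+α}_{WF}([0,T]×S̄_{n,m}), every ε ∈ (0,1), and every l ∈ {1,…,m}: ‖u_{y_l}‖_{C([0,T]×S̄_{n,m})} ≤ ε ‖u‖_{C^{0,2+α}_{WF}([0,T]×S̄_{n,m})} + C ε^{−m₀} ‖u‖_{C([0,T]×S̄_{n,m})}. -/
/-!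
Restrict `u` to the line `s ↦ u (t, x, y + s eₗ)`. Along it the distance `ρ` is `|s|`, so the
`C^{0,α}_WF` seminorm of `u_{y_l}` on the piece `M̄_I` containing the point (a summand of the
`C^{0,2+α}_WF` norm) makes `s ↦ u_{y_l}` `α`-Hölder. By the mean value theorem some point of
`[0, h]` carries a slope of size at most `2 ‖u‖_∞ / h`, and Hölder continuity carries this back to
`s = 0` at cost `‖u‖_{C^{0,2+α}} h^α`. The scale `h = ε^{1/α}` gives `C = 2` and `m₀ = 1/α`.
-/

open scoped ENNReal BigOperators
open Set

noncomputable section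

namespace Kimura

/-- Spatial variable space `ℝ^n × ℝ^m`. -/
abbrev Z (n m : ℕ) : Type := (Fin n → ℝ) × (Fin m → ℝ)

/-- Time–space variable space. -/
abbrev E (n m : ℕ) : Type := ℝ × Z n m

variable {n m : ℕ}

/-- The open orthant `S_{n,m} = (0,∞)^n × ℝ^m`. -/
def Sopen (n m : ℕ) : Set (Z n m) := {z | ∀ i, 0 < z.1 i}

/-- The closed orthant `S̄_{n,m} = [0,∞)^n × ℝ^m`. -/
def Sbar (n m : ℕ) : Set (Z n m) := {z | ∀ i, 0 ≤ z.1 i}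

/-- The function `F` used to define the WF distance. -/
def Fwf (s : ℝ) : ℝ := if s ≤ 1 then 2 * Real.sqrt s else s + 1

/-- The spatial WF distance `ρ₀`. -/
def rho0 (z0 z : Z n m) : ℝ :=
  (⨆ i : Fin n, |Fwf (z0.1 i) - Fwf (z.1 i)|) + ⨆ l : Fin m, |z0.2 l - z.2 l|

/-- The parabolic WF distance `ρ`. -/
def rho (P0 P : E n m) : ℝ := rho0 P0.2 P.2 + Real.sqrt |P0.1 - P.1|

/-- The parabolic cylinder `J × D`. -/
def QT (J : Set ℝ) (D : Set (Z n m)) : Set (E n m) := J ×ˢ D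

/-- Supremum norm on `J × D` (valued in `ℝ≥0∞`). -/
def supN (J : Set ℝ) (D : Set (Z n m)) (u : E n m → ℝ) : ℝ≥0∞ :=
  ⨆ P ∈ QT J D, ENNReal.ofReal |u P|

/-- The WF Hölder seminorm of exponent `a` on `J × D`. -/
def holderSemi (a : ℝ) (J : Set ℝ) (D : Set (Z n m)) (u : E n m → ℝ) : ℝ≥0∞ :=
  ⨆ P1 ∈ QT J D, ⨆ P2 ∈ QT J D, ⨆ _ : P1 ≠ P2,
    ENNReal.ofReal (|u P1 - u P2| / rho P1 P2 ^ a)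

/-- The `C^{0,α}_{WF}` norm on `J × D`. -/
def holderN (a : ℝ) (J : Set ℝ) (D : Set (Z n m)) (u : E n m → ℝ) : ℝ≥0∞ :=
  supN J D u + holderSemi a J D u

/-- Time direction. -/
def eT (n m : ℕ) : E n m := (1, 0)

/-- `x_i` direction. -/
def eX (n m : ℕ) (i : Fin n) : E n m := (0, (Pi.single i 1, 0))

/-- `y_l` direction. -/
def eY (n m : ℕ) (l : Fin m) : E n m := (0, (0, Pi.single l 1))

/-- Partial (line) derivative along the direction `v`. -/
def dl (v : E n m) (u : E n m → ℝ) : E n m → ℝ := fun P => lineDeriv ℝ u P v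

/-- Iterated partial derivative `D_t^τ D_x^{ζx} D_y^{ζy}`. -/
def multiD (τ : ℕ) (ζx : Fin n → ℕ) (ζy : Fin m → ℕ) (u : E n m → ℝ) : E n m → ℝ :=
  (dl (eT n m))^[τ]
    (((List.ofFn fun i : Fin n => (dl (eX n m i))^[ζx i]).foldr (· ∘ ·) id)
      (((List.ofFn fun l : Fin m => (dl (eY n m l))^[ζy l]).foldr (· ∘ ·) id) u))

/-- A parabolic multi-index `(τ, ζ)`. -/
abbrev MIdx (n m : ℕ) : Type := ℕ × (Fin n → ℕ) × (Fin m → ℕ)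

/-- Parabolic weight `2τ + |ζ|` of a multi-index. -/
def MIdx.wt (p : MIdx n m) : ℕ := 2 * p.1 + ((∑ i, p.2.1 i) + ∑ l, p.2.2 l)

/-- Iterated derivative associated with a multi-index. -/
def multiDP (p : MIdx n m) (u : E n m → ℝ) : E n m → ℝ := multiD p.1 p.2.1 p.2.2 u

/-- Multi-indices of parabolic weight at most `k`. -/
def Idx (n m k : ℕ) : Type := {p : MIdx n m // MIdx.wt p ≤ k}

/-- The `C^{k,α}_{WF}` norm on `J × D`. -/
def CkN (k : ℕ) (a : ℝ) (J : Set ℝ) (D : Set (Z n m)) (u : E n m → ℝ) : ℝ≥0∞ :=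
  ∑' p : Idx n m k, holderN a J D (multiDP p.1 u)

/-- The region `M_I`. -/
def MI (n m : ℕ) (I : Finset (Fin n)) : Set (Z n m) :=
  {z | (∀ i ∈ I, z.1 i ∈ Set.Ioo (0:ℝ) 1) ∧ ∀ j ∉ I, 1 < z.1 j}

/-- The region `M'_I`. -/
def MI' (n m : ℕ) (I : Finset (Fin n)) : Set (Z n m) :=
  {z | (∀ i ∈ I, z.1 i ∈ Set.Ioo (0:ℝ) 1) ∧ ∀ j ∉ I, 1 / 2 < z.1 j}

/-- The region `M''_I`. -/
def MI'' (n m : ℕ) (I : Finset (Fin n)) : Set (Z n m) :=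
  {z | (∀ i ∈ I, z.1 i ∈ Set.Ioo (0:ℝ) 2) ∧ ∀ j ∉ I, 1 / 4 < z.1 j}

/-- The `C^{0,2+α}_{WF}` norm on a piece `D ⊆ M̄_I`. -/
def pieceN (I : Finset (Fin n)) (a : ℝ) (J : Set ℝ) (D : Set (Z n m)) (u : E n m → ℝ) :
    ℝ≥0∞ :=
  CkN 1 a J D u + holderN a J D (dl (eT n m) u)
  + (∑ i ∈ I, ∑ j ∈ I, holderN a J D
      fun P => Real.sqrt (P.2.1 i * P.2.1 j) * dl (eX n m i) (dl (eX n m j) u) P)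
  + (∑ i ∈ I, ∑ j ∈ Iᶜ, holderN a J D
      fun P => Real.sqrt (P.2.1 i) * dl (eX n m i) (dl (eX n m j) u) P)
  + (∑ i ∈ I, ∑ l : Fin m, holderN a J D
      fun P => Real.sqrt (P.2.1 i) * dl (eX n m i) (dl (eY n m l) u) P)
  + (∑ i ∈ Iᶜ, ∑ j ∈ Iᶜ, holderN a J D (dl (eX n m i) (dl (eX n m j) u)))
  + (∑ i ∈ Iᶜ, ∑ l : Fin m, holderN a J D (dl (eX n m i) (dl (eY n m l) u)))
  + ∑ l : Fin m, ∑ q : Fin m, holderN a J D (dl (eY n m l) (dl (eY n m q) u))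

/-- The `C^{0,2+α}_{WF}` norm on `J × D` for an arbitrary domain `D`. -/
def C2N (a : ℝ) (J : Set ℝ) (D : Set (Z n m)) (u : E n m → ℝ) : ℝ≥0∞ :=
  ∑ I : Finset (Fin n), pieceN I a J (D ∩ closure (MI n m I)) u

/-- The `C^{k,2+α}_{WF}` norm on `J × D`. -/
def Ck2N (k : ℕ) (a : ℝ) (J : Set ℝ) (D : Set (Z n m)) (u : E n m → ℝ) : ℝ≥0∞ :=
  ∑' p : Idx n m k, C2N a J D (multiDP p.1 u)

/-- Time-independent extension of a spatial function. -/
def timeExt (f : Z n m → ℝ) : E n m → ℝ := fun P => f P.2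

/-- The elliptic `C^{k,α}_{WF}` norm on `D`. -/
def eCkN (k : ℕ) (a : ℝ) (D : Set (Z n m)) (f : Z n m → ℝ) : ℝ≥0∞ :=
  CkN k a (Set.Icc 0 0) D (timeExt f)

/-- The elliptic `C^{k,2+α}_{WF}` norm on `D`. -/
def eCk2N (k : ℕ) (a : ℝ) (D : Set (Z n m)) (f : Z n m → ℝ) : ℝ≥0∞ :=
  Ck2N k a (Set.Icc 0 0) D (timeExt f)

/-- Supremum norm of a spatial function on `D`. -/
def supNZ (D : Set (Z n m)) (f : Z n m → ℝ) : ℝ≥0∞ := ⨆ z ∈ D, ENNReal.ofReal |f z|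

/-- Membership in the space `C^{k,α}_{WF}(J × D)`. -/
def MemCk (k : ℕ) (a : ℝ) (J : Set ℝ) (D : Set (Z n m)) (u : E n m → ℝ) : Prop :=
  CkN k a J D u ≠ ⊤ ∧ ∀ p : Idx n m k, ContinuousOn (multiDP p.1 u) (QT J D)

/-- Membership in the space `C^{k,2+α}_{WF}(J × D)`. -/
def MemCk2 (k : ℕ) (a : ℝ) (J : Set ℝ) (D : Set (Z n m)) (u : E n m → ℝ) : Prop :=
  Ck2N k a J D u ≠ ⊤
  ∧ (∀ p : Idx n m (k + 1), ContinuousOn (multiDP p.1 u) (QT J D))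
  ∧ (∀ p : Idx n m k, ContinuousOn (dl (eT n m) (multiDP p.1 u)) (QT J D))
  ∧ (∀ p : Idx n m (k + 2), ContinuousOn (multiDP p.1 u) (QT J (D ∩ Sopen n m)))

/-- Membership in the elliptic space `C^{k,α}_{WF}(D)`. -/
def MemECk (k : ℕ) (a : ℝ) (D : Set (Z n m)) (f : Z n m → ℝ) : Prop :=
  MemCk k a (Set.Icc 0 0) D (timeExt f)

/-- Membership in the elliptic space `C^{k,2+α}_{WF}(D)`. -/
def MemECk2 (k : ℕ) (a : ℝ) (D : Set (Z n m)) (f : Z n m → ℝ) : Prop :=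
  MemCk2 k a (Set.Icc 0 0) D (timeExt f)

/-- Coefficients of a generalized Kimura operator. -/
structure Coeffs (n m : ℕ) where
  a : Fin n → Z n m → ℝ
  tA : Fin n → Fin n → Z n m → ℝ
  b : Fin n → Z n m → ℝ
  c : Fin n → Fin m → Z n m → ℝ
  d : Fin m → Fin m → Z n m → ℝ
  e : Fin m → Z n m → ℝ

/-- The generalized Kimura operator `L`. -/
def Lop (co : Coeffs n m) (u : E n m → ℝ) : E n m → ℝ := fun P =>
  (∑ i, (P.2.1 i * co.a i P.2 * dl (eX n m i) (dl (eX n m i) u) P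
        + co.b i P.2 * dl (eX n m i) u P))
  + (∑ i, ∑ j, P.2.1 i * P.2.1 j * co.tA i j P.2 * dl (eX n m i) (dl (eX n m j) u) P)
  + (∑ i, ∑ l, P.2.1 i * co.c i l P.2 * dl (eX n m i) (dl (eY n m l) u) P)
  + (∑ q, ∑ l, co.d q l P.2 * dl (eY n m q) (dl (eY n m l) u) P)
  + ∑ l, co.e l P.2 * dl (eY n m l) u P

/-- Strict ellipticity (condition (1) of the Assumption). -/
def Ellipt (δ : ℝ) (co : Coeffs n m) : Prop :=
  ∀ I : Finset (Fin n), ∀ z ∈ closure (MI n m I), ∀ ξ : Fin n → ℝ, ∀ η : Fin m → ℝ,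
    δ * ((∑ i, ξ i ^ 2) + ∑ l, η l ^ 2) ≤
      (∑ i ∈ I, co.a i z * ξ i ^ 2) + (∑ i ∈ Iᶜ, z.1 i * co.a i z * ξ i ^ 2)
      + (∑ i ∈ I, ∑ j ∈ I, co.tA i j z * ξ i * ξ j)
      + (∑ i ∈ I, ∑ j ∈ Iᶜ, z.1 j * (co.tA i j z + co.tA j i z) * ξ i * ξ j)
      + (∑ i ∈ Iᶜ, ∑ j ∈ Iᶜ, z.1 i * z.1 j * co.tA i j z * ξ i * ξ j)
      + (∑ i ∈ I, ∑ l, co.c i l z * ξ i * η l)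
      + (∑ i ∈ Iᶜ, ∑ l, z.1 i * co.c i l z * ξ i * η l)
      + ∑ q, ∑ l, co.d q l z * η q * η l

/-- Hölder continuity of the coefficients (condition (2) of the Assumption). -/
def HolderBd (k : ℕ) (a K : ℝ) (co : Coeffs n m) : Prop :=
  ∀ I : Finset (Fin n),
    (∑ i ∈ I, eCkN k a (closure (MI n m I)) (co.a i))
    + (∑ i ∈ Iᶜ, eCkN k a (closure (MI n m I)) fun z => z.1 i * co.a i z)
    + (∑ i ∈ I, ∑ j ∈ I, eCkN k a (closure (MI n m I)) (co.tA i j))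
    + (∑ i ∈ I, ∑ j ∈ Iᶜ,
        (eCkN k a (closure (MI n m I)) (fun z => z.1 j * co.tA i j z)
         + eCkN k a (closure (MI n m I)) fun z => z.1 j * co.tA j i z))
    + (∑ i ∈ Iᶜ, ∑ j ∈ Iᶜ, eCkN k a (closure (MI n m I)) fun z => z.1 i * z.1 j * co.tA i j z)
    + (∑ i ∈ I, ∑ l, eCkN k a (closure (MI n m I)) (co.c i l))
    + (∑ i ∈ Iᶜ, ∑ l, eCkN k a (closure (MI n m I)) fun z => z.1 i * co.c i l z)
    + (∑ q, ∑ l, eCkN k a (closure (MI n m I)) (co.d q l))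
    + (∑ i, eCkN k a (closure (MI n m I)) (co.b i))
    + (∑ l, eCkN k a (closure (MI n m I)) (co.e l))
    ≤ ENNReal.ofReal K

/-- Nonnegativity of the drift (condition (3) of the Assumption). -/
def NonnegDrift (co : Coeffs n m) : Prop :=
  ∀ i, ∀ z ∈ Sbar n m, z.1 i = 0 → 0 ≤ co.b i z

/-- The full coefficient Assumption of order `k`, exponent `a`, constants `δ`, `K`. -/
def Assump (k : ℕ) (a δ K : ℝ) (co : Coeffs n m) : Prop :=
  Ellipt δ co ∧ HolderBd k a K co ∧ NonnegDrift co

/-- The Euclidean ball of radius `r` about `z0`, relative to `S_{n,m}`. -/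
def ball (z0 : Z n m) (r : ℝ) : Set (Z n m) :=
  {z ∈ Sopen n m |
    Real.sqrt ((∑ i, (z.1 i - z0.1 i) ^ 2) + ∑ l, (z.2 l - z0.2 l) ^ 2) < r}

/-- A function all of whose iterated derivatives are continuous and bounded on `J × D`. -/
def SmoothBdd (J : Set ℝ) (D : Set (Z n m)) (g : E n m → ℝ) : Prop :=
  ∀ p : MIdx n m,
    ContinuousOn (multiDP p g) (QT J D) ∧ ∃ M : ℝ, ∀ P ∈ QT J D, |multiDP p g P| ≤ M

/-- Bounded continuous function on a set. -/
def BCOn {X : Type*} [TopologicalSpace X] (g : X → ℝ) (D : Set X) : Prop :=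
  ContinuousOn g D ∧ ∃ M : ℝ, ∀ x ∈ D, |g x| ≤ M

end Kimura

theorem lineDeriv_add_smul_eq_deriv {𝕜 V F : Type*} [NontriviallyNormedField 𝕜]
    [AddCommGroup V] [Module 𝕜 V] [NormedAddCommGroup F] [NormedSpace 𝕜 F]
    (f : V → F) (x v : V) (s : 𝕜) :
    lineDeriv 𝕜 f (x + s • v) v = deriv (fun t => f (x + t • v)) s := by
  have hshift : (fun t : 𝕜 => f (x + s • v + t • v)) = fun t => f (x + (s + t) • v) := by
    simp only [add_smul, add_assoc]
  rw [lineDeriv, hshift, deriv_comp_const_add (fun t => f (x + t • v)), add_zero]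

theorem foldr_comp_replicate_id (A : Type*) (k : ℕ) :
    (List.replicate k (id : A → A)).foldr (· ∘ ·) id = id := by
  induction k <;> simp_all [List.replicate_succ]

theorem foldr_comp_ofFn_eq_of_ne_eq_id {A : Type*} {k : ℕ} (f : Fin k → A → A) (l : Fin k)
    (hf : ∀ j, j ≠ l → f j = id) : (List.ofFn f).foldr (· ∘ ·) id = f l := by
  induction k with
  | zero => exact l.elim0
  | succ k ih =>
    rw [List.ofFn_succ, List.foldr_cons]
    cases l using Fin.cases with
    | zero =>
      have htail : (fun j : Fin k => f j.succ) = fun _ => id :=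
        funext fun j => hf _ (Fin.succ_ne_zero j)
      simp [htail, foldr_comp_replicate_id]
    | succ l =>
      rw [hf 0 (Fin.succ_ne_zero l).symm, ih _ l fun j hj => hf j.succ (by simpa using hj)]
      rfl

theorem abs_deriv_le_of_abs_sub_deriv_le {g : ℝ → ℝ} {S N h : ℝ} (hh : 0 < h)
    (hS : ∀ s ∈ Icc 0 h, |g s| ≤ S) (hosc : ∀ s ∈ Icc 0 h, |deriv g s - deriv g 0| ≤ N) :
    |deriv g 0| ≤ N + 2 * S / h := by
  have hS0 : 0 ≤ S := (abs_nonneg _).trans (hS 0 (left_mem_Icc.2 hh.le))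
  by_cases hd : ∀ s ∈ Icc 0 h, DifferentiableAt ℝ g s
  · obtain ⟨c, hc, hslope⟩ := exists_deriv_eq_slope g hh
      (fun s hs => (hd s hs).continuousAt.continuousWithinAt)
      (fun s hs => (hd s (Ioo_subset_Icc_self hs)).differentiableWithinAt)
    have hderiv_c : |deriv g c| ≤ 2 * S / h := by
      rw [hslope, sub_zero, abs_div, abs_of_pos hh]
      gcongr
      linarith [abs_sub (g h) (g 0), hS h (right_mem_Icc.2 hh.le), hS 0 (left_mem_Icc.2 hh.le)]
    have hosc_c := hosc c (Ioo_subset_Icc_self hc)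
    have htri := abs_sub (deriv g c) (deriv g c - deriv g 0)
    rw [sub_sub_cancel] at htri
    linarith
  · -- where `g` is not differentiable its junk derivative `0` is compared with `deriv g 0`
    push Not at hd
    obtain ⟨s, hs, hns⟩ := hd
    have hosc_s := hosc s hs
    rw [deriv_zero_of_not_differentiableAt hns, zero_sub, abs_neg] at hosc_s
    linarith [div_nonneg (mul_nonneg zero_le_two hS0) hh.le]

theorem abs_deriv_le_of_holder {g : ℝ → ℝ} {S H a ε : ℝ} (ha : 0 < a) (hε : 0 < ε)
    (hH : 0 ≤ H) (hS : ∀ s, |g s| ≤ S)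
    (hhol : ∀ s, 0 < s → |deriv g s - deriv g 0| ≤ H * s ^ a) :
    |deriv g 0| ≤ ε * H + 2 * ε ^ (-(1 / a)) * S := by
  -- the scale `h = ε ^ (1 / a)` makes the Hölder oscillation on `[0, h]` exactly `ε * H`
  set h := ε ^ (1 / a) with hh
  have hpos : 0 < h := Real.rpow_pos_of_pos hε _
  have hha : h ^ a = ε := by
    rw [hh, ← Real.rpow_mul hε.le, one_div_mul_cancel ha.ne', Real.rpow_one]
  have hosc : ∀ s ∈ Icc 0 h, |deriv g s - deriv g 0| ≤ ε * H := by
    rintro s ⟨hs0, hsh⟩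
    rcases hs0.eq_or_lt with rfl | hs
    · simpa using mul_nonneg hε.le hH
    calc |deriv g s - deriv g 0| ≤ H * s ^ a := hhol s hs
      _ ≤ H * h ^ a := by gcongr
      _ = ε * H := by rw [hha, mul_comm]
  calc |deriv g 0| ≤ ε * H + 2 * S / h :=
        abs_deriv_le_of_abs_sub_deriv_le hpos (fun s _ => hS s) hosc
    _ = ε * H + 2 * ε ^ (-(1 / a)) * S := by
      rw [hh, Real.rpow_neg hε.le, div_eq_mul_inv]
      ring

namespace Kimura

variable {n m : ℕ}

theorem multiDP_zero (u : E n m → ℝ) : multiDP ((0, 0, 0) : MIdx n m) u = u := by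
  simp [multiDP, multiD, foldr_comp_replicate_id]

theorem multiDP_single_eY (l : Fin m) (u : E n m → ℝ) :
    multiDP ((0, 0, Pi.single l 1) : MIdx n m) u = dl (eY n m l) u := by
  rw [multiDP, multiD, foldr_comp_ofFn_eq_of_ne_eq_id _ l fun j hj => by simp [hj]]
  simp [foldr_comp_replicate_id]

theorem closure_MI (I : Finset (Fin n)) :
    closure (MI n m I) = {z | (∀ i ∈ I, z.1 i ∈ Icc (0:ℝ) 1) ∧ ∀ j ∉ I, 1 ≤ z.1 j} := by
  have hMI : MI n m I =
      (univ.pi fun i => if i ∈ I then Ioo (0:ℝ) 1 else Ioi 1) ×ˢ (univ : Set (Fin m → ℝ)) := by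
    ext z
    simp only [MI, mem_ofPred_eq, mem_prod, mem_pi, mem_univ, true_implies, and_true]
    refine ⟨fun h i => ?_, fun h => ⟨fun i hi => ?_, fun j hj => ?_⟩⟩
    · split_ifs with hi
      exacts [h.1 i hi, h.2 i hi]
    · simpa [hi] using h i
    · simpa [hj] using h j
  rw [hMI, closure_prod_eq, closure_pi_set, closure_univ]
  ext z
  simp only [mem_ofPred_eq, mem_prod, mem_pi, mem_univ, true_implies, and_true]
  refine ⟨fun h => ⟨fun i hi => ?_, fun j hj => ?_⟩, fun h i => ?_⟩
  · simpa [hi, closure_Ioo zero_ne_one] using h i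
  · simpa [hj] using h j
  · split_ifs with hi
    · simpa [closure_Ioo zero_ne_one] using h.1 i hi
    · simpa using h.2 i hi

theorem add_smul_eY_fst (P : E n m) (l : Fin m) (s : ℝ) : (P + s • eY n m l).1 = P.1 := by
  simp [eY]

theorem add_smul_eY_snd_fst (P : E n m) (l : Fin m) (s : ℝ) :
    (P + s • eY n m l).2.1 = P.2.1 := by
  ext; simp [eY]

theorem rho_add_smul_eY (P : E n m) (l : Fin m) (s : ℝ) : rho (P + s • eY n m l) P = |s| := by
  have hy : ∀ q, |(P + s • eY n m l).2.2 q - P.2.2 q| = if q = l then |s| else 0 := by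
    intro q
    split_ifs with hq <;> simp [eY, hq]
  have hsup : (⨆ q : Fin m, |(P + s • eY n m l).2.2 q - P.2.2 q|) = |s| := by
    have : Nonempty (Fin m) := ⟨l⟩
    simp only [hy]
    exact le_antisymm (ciSup_le fun q => by split_ifs <;> simp)
      (le_ciSup_of_le (Set.finite_range _).bddAbove l (by simp))
  rw [rho, rho0, add_smul_eY_fst, add_smul_eY_snd_fst, hsup]
  simp

theorem mem_closure_MI_filter {z : Z n m} (hz : z ∈ Sbar n m) :
    z ∈ closure (MI n m (Finset.univ.filter fun i => z.1 i ≤ 1)) := by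
  rw [closure_MI]
  exact ⟨fun i hi => ⟨hz i, (Finset.mem_filter.1 hi).2⟩,
    fun j hj => le_of_lt (not_le.1 fun h => hj (Finset.mem_filter.2 ⟨Finset.mem_univ j, h⟩))⟩

theorem add_smul_eY_mem_QT {J : Set ℝ} {P : E n m} (hP : P ∈ QT J (Sbar n m)) (l : Fin m)
    (s : ℝ) :
    P + s • eY n m l ∈
      QT J (Sbar n m ∩ closure (MI n m (Finset.univ.filter fun i => P.2.1 i ≤ 1))) := by
  have hz : (P + s • eY n m l).2 ∈ Sbar n m := fun i => by
    rw [add_smul_eY_snd_fst]; exact hP.2 i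
  refine ⟨by rw [add_smul_eY_fst]; exact hP.1, hz, ?_⟩
  simpa only [add_smul_eY_snd_fst] using mem_closure_MI_filter hz

theorem abs_le_toReal_supN {J : Set ℝ} {D : Set (Z n m)} {u : E n m → ℝ} {P : E n m}
    (hP : P ∈ QT J D) (hS : supN J D u ≠ ⊤) : |u P| ≤ (supN J D u).toReal :=
  (ENNReal.ofReal_le_iff_le_toReal hS).1
    (le_iSup₂ (f := fun Q (_ : Q ∈ QT J D) => ENNReal.ofReal |u Q|) P hP)

theorem abs_sub_le_toReal_holderSemi_mul {a : ℝ} {J : Set ℝ} {D : Set (Z n m)}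
    {u : E n m → ℝ} {P₁ P₂ : E n m} (h₁ : P₁ ∈ QT J D) (h₂ : P₂ ∈ QT J D)
    (hρ : 0 < rho P₁ P₂) (hH : holderSemi a J D u ≠ ⊤) :
    |u P₁ - u P₂| ≤ (holderSemi a J D u).toReal * rho P₁ P₂ ^ a := by
  have hne : P₁ ≠ P₂ := by
    rintro rfl
    simp [rho, rho0] at hρ
  have hquot : ENNReal.ofReal (|u P₁ - u P₂| / rho P₁ P₂ ^ a) ≤ holderSemi a J D u :=
    le_iSup₂_of_le P₁ h₁ (le_iSup₂_of_le P₂ h₂ (le_iSup_of_le hne le_rfl))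
  rw [← div_le_iff₀ (Real.rpow_pos_of_pos hρ a)]
  exact (ENNReal.ofReal_le_iff_le_toReal hH).1 hquot

theorem holderSemi_dl_eY_le_Ck2N (a : ℝ) (J : Set ℝ) (D : Set (Z n m)) (I : Finset (Fin n))
    (l : Fin m) (u : E n m → ℝ) :
    holderSemi a J (D ∩ closure (MI n m I)) (dl (eY n m l) u) ≤ Ck2N 0 a J D u := by
  set D' := D ∩ closure (MI n m I)
  have hwt_eY : MIdx.wt ((0, 0, Pi.single l 1) : MIdx n m) ≤ 1 := by simp [MIdx.wt]
  have hwt_zero : MIdx.wt ((0, 0, 0) : MIdx n m) ≤ 0 := by simp [MIdx.wt]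
  calc holderSemi a J D' (dl (eY n m l) u)
      ≤ holderN a J D' (dl (eY n m l) u) := le_add_self
    _ ≤ CkN 1 a J D' u := by
      rw [CkN]
      simpa only [multiDP_single_eY] using
        ENNReal.le_tsum (f := fun p : Idx n m 1 => holderN a J D' (multiDP p.1 u)) ⟨_, hwt_eY⟩
    _ ≤ pieceN I a J D' u := by
      rw [pieceN]
      iterate 7 refine le_trans ?_ le_self_add
      rfl
    _ ≤ C2N a J D u :=
      Finset.single_le_sum (f := fun I => pieceN I a J (D ∩ closure (MI n m I)) u)
        (fun _ _ => zero_le) (Finset.mem_univ I)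
    _ ≤ Ck2N 0 a J D u := by
      rw [Ck2N]
      simpa only [multiDP_zero] using
        ENNReal.le_tsum (f := fun p : Idx n m 0 => C2N a J D (multiDP p.1 u)) ⟨_, hwt_zero⟩

theorem abs_dl_eY_le {a ε : ℝ} (ha : 0 < a) (hε : 0 < ε) {J : Set ℝ} {u : E n m → ℝ}
    (hN : Ck2N 0 a J (Sbar n m) u ≠ ⊤) (hS : supN J (Sbar n m) u ≠ ⊤) (l : Fin m)
    {P : E n m} (hP : P ∈ QT J (Sbar n m)) :
    |dl (eY n m l) u P| ≤ ε * (Ck2N 0 a J (Sbar n m) u).toReal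
      + 2 * ε ^ (-(1 / a)) * (supN J (Sbar n m) u).toReal := by
  set g : ℝ → ℝ := fun s => u (P + s • eY n m l)
  have hdg : ∀ s, dl (eY n m l) u (P + s • eY n m l) = deriv g s :=
    lineDeriv_add_smul_eq_deriv u P _
  have hdg0 : dl (eY n m l) u P = deriv g 0 := by simpa using hdg 0
  have hline := add_smul_eY_mem_QT hP l
  have hsemi := holderSemi_dl_eY_le_Ck2N a J (Sbar n m)
    (Finset.univ.filter fun i => P.2.1 i ≤ 1) l u
  have hhol : ∀ s, 0 < s →
      |deriv g s - deriv g 0| ≤ (Ck2N 0 a J (Sbar n m) u).toReal * s ^ a := by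
    intro s hs
    have hρ : rho (P + s • eY n m l) P = s := by rw [rho_add_smul_eY, abs_of_pos hs]
    calc |deriv g s - deriv g 0|
        = |dl (eY n m l) u (P + s • eY n m l) - dl (eY n m l) u P| := by rw [hdg, hdg0]
      _ ≤ _ := abs_sub_le_toReal_holderSemi_mul (hline s) (by simpa using hline 0)
          (hρ.symm ▸ hs) (ne_top_of_le_ne_top hN hsemi)
      _ ≤ _ := by rw [hρ]; gcongr
  rw [hdg0]
  exact abs_deriv_le_of_holder ha hε ENNReal.toReal_nonneg
    (fun s => abs_le_toReal_supN ⟨(hline s).1, (hline s).2.1⟩ hS) hhol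

theorem statement6_general (n m : ℕ) (T : ℝ)
    (a : ℝ) (ha : a ∈ Set.Ioo (0:ℝ) 1) :
    ∃ C > (0:ℝ), ∃ m₀ > (0:ℝ), ∀ u : E n m → ℝ,
      MemCk2 0 a (Set.Icc 0 T) (Sbar n m) u → ∀ ε ∈ Set.Ioo (0:ℝ) 1, ∀ l : Fin m,
        supN (Set.Icc 0 T) (Sbar n m) (dl (eY n m l) u) ≤
          ENNReal.ofReal ε * Ck2N 0 a (Set.Icc 0 T) (Sbar n m) u
            + ENNReal.ofReal (C * ε ^ (-m₀)) * supN (Set.Icc 0 T) (Sbar n m) u := by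
  refine ⟨2, two_pos, 1 / a, one_div_pos.2 ha.1, fun u hu ε hε l => ?_⟩
  set N := Ck2N 0 a (Set.Icc 0 T) (Sbar n m) u
  set S := supN (Set.Icc 0 T) (Sbar n m) u
  have hC : 0 < 2 * ε ^ (-(1 / a)) := by have := hε.1; positivity
  rcases eq_or_ne S ⊤ with hS | hS
  · rw [hS, ENNReal.mul_top (ENNReal.ofReal_pos.2 hC).ne', add_top]
    exact le_top
  refine iSup₂_le fun P hP => ?_
  calc ENNReal.ofReal |dl (eY n m l) u P|
      ≤ ENNReal.ofReal (ε * N.toReal + 2 * ε ^ (-(1 / a)) * S.toReal) :=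
        ENNReal.ofReal_le_ofReal (abs_dl_eY_le ha.1 hε.1 hu.1 hS l hP)
    _ ≤ ENNReal.ofReal (ε * N.toReal) + ENNReal.ofReal (2 * ε ^ (-(1 / a)) * S.toReal) :=
        ENNReal.ofReal_add_le
    _ = ENNReal.ofReal ε * N + ENNReal.ofReal (2 * ε ^ (-(1 / a))) * S := by
        rw [ENNReal.ofReal_mul hε.1.le, ENNReal.ofReal_mul hC.le, ENNReal.ofReal_toReal hu.1,
          ENNReal.ofReal_toReal hS]

/-- Interpolation inequality (2.6): sup norm of `u_{y_l}`. -/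
theorem statement6 (n m : ℕ) (hnm : 1 ≤ n + m) (T : ℝ) (hT : 0 < T)
    (a : ℝ) (ha : a ∈ Set.Ioo (0:ℝ) 1) :
    ∃ C > (0:ℝ), ∃ m₀ > (0:ℝ), ∀ u : E n m → ℝ,
      MemCk2 0 a (Set.Icc 0 T) (Sbar n m) u → ∀ ε ∈ Set.Ioo (0:ℝ) 1, ∀ l : Fin m,
        supN (Set.Icc 0 T) (Sbar n m) (dl (eY n m l) u) ≤
          ENNReal.ofReal ε * Ck2N 0 a (Set.Icc 0 T) (Sbar n m) u
            + ENNReal.ofReal (C * ε ^ (-m₀)) * supN (Set.Icc 0 T) (Sbar n m) u :=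
  statement6_general n m T a ha

end Kimura
end
end

section
/- There exists a constant c = c(n,m) ∈ (0,1] such that for all index sets I, J ⊆ {1,…,n}, all z⁰ ∈ M̄_I and all z ∈ M̄_J: c·E(z⁰,z) ≤ ρ_0(z⁰,z) ≤ c^{-1}·E(z⁰,z), where E(z⁰,z) := max_{i ∈ I∩J} |√(x⁰_i) − √(x_i)| + max_{j ∈ {1,…,n} \ (I∩J)} |x⁰_j − x_j| + max_{1≤l≤m} |y⁰_l − y_l| (maxima over empty index sets are 0). -/
/-
On `[0,1]` the function `F` is `2√·` and on `[1,∞)` it is a translation, so coordinatewise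
`|F s - F t|` equals `2|√s - √t|` when `s, t ∈ [0,1]` and `|s - t|` when `s, t ≥ 1`. In the mixed
case `s ≤ 1 ≤ t` it lies between `|s - t|` and `2|s - t|`, because `2√s ≤ s + 1` and `s ≤ √s`.
Since a maximum over `{1,…,n}` lies between the larger and the sum of the maxima over
`I ∩ J` and its complement, `c = 1/2` works.
-/

open scoped ENNReal BigOperators
open Set

noncomputable section

namespace Kimura

variable {n m : ℕ}

/-- The comparison quantity `E(z⁰,z)` in the equivalence of metrics (1.3). -/
def eqQty (I J : Finset (Fin n)) (z0 z : Z n m) : ℝ :=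
  (⨆ i : {i : Fin n // i ∈ I ∩ J}, |Real.sqrt (z0.1 i) - Real.sqrt (z.1 i)|)
  + (⨆ j : {j : Fin n // j ∉ I ∩ J}, |z0.1 j - z.1 j|)
  + ⨆ l : Fin m, |z0.2 l - z.2 l|

end Kimura

namespace Real

variable {ι : Type*} [Finite ι] {f g h : ι → ℝ}

lemma iSup_subtype_le_of_le (p : ι → Prop) (hg : 0 ≤ g) (hfg : ∀ i, p i → f i ≤ g i) :
    ⨆ i : {i // p i}, f i ≤ ⨆ i, g i :=
  Real.iSup_le (fun i => (hfg i i.2).trans (le_ciSup (Finite.bddAbove_range g) i))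
    (Real.iSup_nonneg hg)

lemma iSup_le_iSup_subtype_add_iSup_subtype_not (p : ι → Prop) (hg : 0 ≤ g) (hh : 0 ≤ h)
    (hfg : ∀ i, p i → f i ≤ g i) (hfh : ∀ i, ¬p i → f i ≤ h i) :
    ⨆ i, f i ≤ (⨆ i : {i // p i}, g i) + ⨆ i : {i // ¬p i}, h i := by
  have hG : 0 ≤ ⨆ i : {i // p i}, g i := Real.iSup_nonneg fun i => hg i
  have hH : 0 ≤ ⨆ i : {i // ¬p i}, h i := Real.iSup_nonneg fun i => hh i
  refine Real.iSup_le (fun i => ?_) (add_nonneg hG hH)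
  by_cases hi : p i
  · have := le_ciSup (Finite.bddAbove_range fun i : {i // p i} => g i) ⟨i, hi⟩
    linarith [hfg i hi]
  · have := le_ciSup (Finite.bddAbove_range fun i : {i // ¬p i} => h i) ⟨i, hi⟩
    linarith [hfh i hi]

end Real

namespace Kimura

variable {n m : ℕ}

lemma Fwf_of_le_one {s : ℝ} (hs : s ≤ 1) : Fwf s = 2 * Real.sqrt s := if_pos hs

lemma Fwf_of_one_le {s : ℝ} (hs : 1 ≤ s) : Fwf s = s + 1 := by
  rcases hs.lt_or_eq with hs | rfl
  · exact if_neg hs.not_ge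
  · norm_num [Fwf]

lemma abs_Fwf_sub_of_le_one {s t : ℝ} (hs : s ≤ 1) (ht : t ≤ 1) :
    |Fwf s - Fwf t| = 2 * |Real.sqrt s - Real.sqrt t| := by
  rw [Fwf_of_le_one hs, Fwf_of_le_one ht, ← mul_sub, abs_mul, abs_two]

lemma abs_Fwf_sub_of_one_le {s t : ℝ} (hs : 1 ≤ s) (ht : 1 ≤ t) :
    |Fwf s - Fwf t| = |s - t| := by
  rw [Fwf_of_one_le hs, Fwf_of_one_le ht, add_sub_add_right_eq_sub]

lemma abs_sub_le_abs_Fwf_sub_of_le_one_le {s t : ℝ} (hs₀ : 0 ≤ s) (hs₁ : s ≤ 1) (ht : 1 ≤ t) :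
    |s - t| ≤ |Fwf s - Fwf t| ∧ |Fwf s - Fwf t| ≤ 2 * |s - t| := by
  have hsqrt_le_one : Real.sqrt s ≤ 1 := Real.sqrt_le_one.mpr hs₁
  have hsq : Real.sqrt s ^ 2 = s := Real.sq_sqrt hs₀
  have hsqrt_nonneg := Real.sqrt_nonneg s
  rw [Fwf_of_le_one hs₁, Fwf_of_one_le ht, abs_of_nonpos (by linarith : s - t ≤ 0),
    abs_of_nonpos (by nlinarith : 2 * Real.sqrt s - (t + 1) ≤ 0)]
  constructor <;> nlinarith

lemma abs_sub_le_abs_Fwf_sub_of_one_le_or {s t : ℝ} (hs : 0 ≤ s) (ht : 0 ≤ t)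
    (hst : 1 ≤ s ∨ 1 ≤ t) :
    |s - t| ≤ |Fwf s - Fwf t| ∧ |Fwf s - Fwf t| ≤ 2 * |s - t| := by
  wlog ht₁ : 1 ≤ t generalizing s t
  · rw [abs_sub_comm s, abs_sub_comm (Fwf s)]
    exact this ht hs hst.symm (hst.resolve_right ht₁)
  rcases le_total s 1 with hs₁ | hs₁
  · exact abs_sub_le_abs_Fwf_sub_of_le_one_le hs hs₁ ht₁
  · rw [abs_Fwf_sub_of_one_le hs₁ ht₁]
    exact ⟨le_rfl, by linarith [abs_nonneg (s - t)]⟩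

section Comparison

variable {I J : Finset (Fin n)} {z0 z : Z n m}

lemma continuous_coord (i : Fin n) : Continuous fun z : Z n m => z.1 i :=
  (continuous_apply i).comp continuous_fst

lemma mem_Icc_of_mem_closure_MI (hz : z ∈ closure (MI n m I)) {i : Fin n} (hi : i ∈ I) :
    z.1 i ∈ Icc 0 1 :=
  closure_minimal (t := (fun w : Z n m => w.1 i) ⁻¹' Icc 0 1)
    (fun _ hw => Ioo_subset_Icc_self (hw.1 i hi))
    (isClosed_Icc.preimage (continuous_coord i)) hz

lemma one_le_of_mem_closure_MI (hz : z ∈ closure (MI n m I)) {i : Fin n} (hi : i ∉ I) :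
    1 ≤ z.1 i :=
  closure_minimal (t := (fun w : Z n m => w.1 i) ⁻¹' Ici 1) (fun _ hw => (hw.2 i hi).le)
    (isClosed_Ici.preimage (continuous_coord i)) hz

lemma nonneg_of_mem_closure_MI (hz : z ∈ closure (MI n m I)) (i : Fin n) : 0 ≤ z.1 i := by
  by_cases hi : i ∈ I
  · exact (mem_Icc_of_mem_closure_MI hz hi).1
  · exact zero_le_one.trans (one_le_of_mem_closure_MI hz hi)

lemma abs_Fwf_sub_of_mem_inter (hz0 : z0 ∈ closure (MI n m I)) (hz : z ∈ closure (MI n m J))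
    {i : Fin n} (hi : i ∈ I ∩ J) :
    |Fwf (z0.1 i) - Fwf (z.1 i)| = 2 * |Real.sqrt (z0.1 i) - Real.sqrt (z.1 i)| := by
  rw [Finset.mem_inter] at hi
  exact abs_Fwf_sub_of_le_one (mem_Icc_of_mem_closure_MI hz0 hi.1).2
    (mem_Icc_of_mem_closure_MI hz hi.2).2

lemma abs_sub_le_abs_Fwf_sub_of_not_mem_inter (hz0 : z0 ∈ closure (MI n m I))
    (hz : z ∈ closure (MI n m J)) {i : Fin n} (hi : i ∉ I ∩ J) :
    |z0.1 i - z.1 i| ≤ |Fwf (z0.1 i) - Fwf (z.1 i)| ∧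
      |Fwf (z0.1 i) - Fwf (z.1 i)| ≤ 2 * |z0.1 i - z.1 i| := by
  rw [Finset.mem_inter, not_and_or] at hi
  exact abs_sub_le_abs_Fwf_sub_of_one_le_or (nonneg_of_mem_closure_MI hz0 i)
    (nonneg_of_mem_closure_MI hz i)
    (hi.imp (one_le_of_mem_closure_MI hz0) (one_le_of_mem_closure_MI hz))

lemma eqQty_le_two_mul_rho0 (hz0 : z0 ∈ closure (MI n m I)) (hz : z ∈ closure (MI n m J)) :
    eqQty I J z0 z ≤ 2 * rho0 z0 z := by
  have hF : 0 ≤ fun i => |Fwf (z0.1 i) - Fwf (z.1 i)| := fun i => abs_nonneg _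
  have hinter : ⨆ i : {i // i ∈ I ∩ J}, |Real.sqrt (z0.1 i) - Real.sqrt (z.1 i)| ≤
      ⨆ i, |Fwf (z0.1 i) - Fwf (z.1 i)| := by
    refine Real.iSup_subtype_le_of_le _ (f := fun i => |Real.sqrt (z0.1 i) - Real.sqrt (z.1 i)|)
      hF fun i hi => ?_
    rw [abs_Fwf_sub_of_mem_inter hz0 hz hi]
    linarith [abs_nonneg (Real.sqrt (z0.1 i) - Real.sqrt (z.1 i))]
  have hcompl : ⨆ i : {i // i ∉ I ∩ J}, |z0.1 i - z.1 i| ≤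
      ⨆ i, |Fwf (z0.1 i) - Fwf (z.1 i)| :=
    Real.iSup_subtype_le_of_le _ hF fun i hi =>
      (abs_sub_le_abs_Fwf_sub_of_not_mem_inter hz0 hz hi).1
  have hy : 0 ≤ ⨆ l, |z0.2 l - z.2 l| := Real.iSup_nonneg fun _ => abs_nonneg _
  rw [eqQty, rho0]
  linarith

lemma rho0_le_two_mul_eqQty (hz0 : z0 ∈ closure (MI n m I)) (hz : z ∈ closure (MI n m J)) :
    rho0 z0 z ≤ 2 * eqQty I J z0 z := by
  have hx : ⨆ i, |Fwf (z0.1 i) - Fwf (z.1 i)| ≤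
      (⨆ i : {i // i ∈ I ∩ J}, 2 * |Real.sqrt (z0.1 i) - Real.sqrt (z.1 i)|) +
        ⨆ i : {i // i ∉ I ∩ J}, 2 * |z0.1 i - z.1 i| :=
    Real.iSup_le_iSup_subtype_add_iSup_subtype_not _
      (fun _ => by positivity) (fun _ => by positivity)
      (fun i hi => (abs_Fwf_sub_of_mem_inter hz0 hz hi).le)
      (fun i hi => (abs_sub_le_abs_Fwf_sub_of_not_mem_inter hz0 hz hi).2)
  have hy : 0 ≤ ⨆ l, |z0.2 l - z.2 l| := Real.iSup_nonneg fun _ => abs_nonneg _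
  rw [← Real.mul_iSup_of_nonneg two_pos.le, ← Real.mul_iSup_of_nonneg two_pos.le] at hx
  rw [eqQty, rho0]
  linarith

end Comparison

theorem statement18_general (n m : ℕ) :
    ∃ c : ℝ, c ∈ Set.Ioc (0:ℝ) 1 ∧
      ∀ I J : Finset (Fin n), ∀ z0 ∈ closure (MI n m I), ∀ z ∈ closure (MI n m J),
        c * eqQty I J z0 z ≤ rho0 z0 z ∧ rho0 z0 z ≤ c⁻¹ * eqQty I J z0 z := by
  refine ⟨1 / 2, by norm_num, fun I J z0 hz0 z hz => ⟨?_, ?_⟩⟩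
  · linarith [eqQty_le_two_mul_rho0 hz0 hz]
  · simpa using rho0_le_two_mul_eqQty hz0 hz

/-- Equivalence of the WF distance with the model quantity (inequality (1.3)). -/
theorem statement18 (n m : ℕ) (hnm : 1 ≤ n + m) :
    ∃ c : ℝ, c ∈ Set.Ioc (0:ℝ) 1 ∧
      ∀ I J : Finset (Fin n), ∀ z0 ∈ closure (MI n m I), ∀ z ∈ closure (MI n m J),
        c * eqQty I J z0 z ≤ rho0 z0 z ∧ rho0 z0 z ≤ c⁻¹ * eqQty I J z0 z :=
  statement18_general n m

end Kimura
end
end
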